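/- arXiv:2010.08908 — 5 statements merged into one kernel-verified Lean document; each statement's English description precedes it below -/
import Mathlib

section
/- Let the sequence (α_k) be defined by α_1 = 1 and α_{k+1} = (√(α_k⁴ + 4α_k²) − α_k²)/2. Then for all k ≥ 1, √2/(k+2) ≤ α_k ≤ 2/(k+1). -/
lemma mono_aux {x c : ℝ} (hx : 0 < x) (hx1 : x < 1) (hc : 0 < c)
    (h : x^2*(1-c) ≤ c^2*(1-x)) : x ≤ c := by
  by_contra h'
  push_neg at h'
  nlinarith [mul_pos hc hx, mul_pos (sub_pos.mpr h') hx]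

set_option maxHeartbeats 1000000 in
theorem stmt_0 (α : ℕ → ℝ)
    (hpos : ∀ k ≥ 1, 0 < α k)
    (h1 : α 1 = 1)
    (hrec : ∀ k ≥ 1, α (k + 1) = (Real.sqrt ((α k) ^ 4 + 4 * (α k) ^ 2) - (α k) ^ 2) / 2) :
    ∀ k ≥ 1, Real.sqrt 2 / (k + 2) ≤ α k ∧ α k ≤ 2 / (k + 1) := by
  have hs2 : Real.sqrt 2 ≤ 3/2 := by
    nlinarith [Real.sq_sqrt (by norm_num : (0:ℝ) ≤ 2), Real.sqrt_nonneg 2]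
  have hs2' : (0:ℝ) ≤ Real.sqrt 2 := Real.sqrt_nonneg 2
  have key : ∀ k, 1 ≤ k → (α (k+1))^2 + (α k)^2 * α (k+1) = (α k)^2 := by
    intro k hk
    have hr := hrec k hk
    have hs : Real.sqrt ((α k)^4 + 4*(α k)^2) = 2 * α (k+1) + (α k)^2 := by
      rw [hr]; ring
    have hnn : (0:ℝ) ≤ (α k)^4 + 4*(α k)^2 := by positivity
    have h := Real.sq_sqrt hnn
    rw [hs] at h
    nlinarith [h]
  intro k hk
  induction k, hk using Nat.le_induction with
  | base =>
    rw [h1]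
    norm_num
    nlinarith
  | succ k hk IH =>
    obtain ⟨hlo, hhi⟩ := IH
    set a := α k with ha_def
    set x := α (k+1) with hx_def
    have hapos : 0 < a := hpos k hk
    have hxpos : 0 < x := hpos (k+1) (by omega)
    have hx2 := key k hk
    have hK : (1:ℝ) ≤ (k:ℝ) := by exact_mod_cast hk
    have hx1 : x < 1 := by nlinarith
    have e1 : x^2 = a^2 * (1-x) := by linear_combination hx2
    push_cast
    constructor
    · -- lower bound: sqrt 2 / (k+3) ≤ x
      have hc' : (0:ℝ) < Real.sqrt 2 / ((k:ℝ)+3) := by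
        have : (0:ℝ) < Real.sqrt 2 := Real.sqrt_pos.mpr (by norm_num)
        positivity
      have hc'1 : Real.sqrt 2 / ((k:ℝ)+3) < 1 := by
        rw [div_lt_one (by linarith)]; linarith
      have hcsq : (Real.sqrt 2 / ((k:ℝ)+3))^2 = 2/((k:ℝ)+3)^2 := by
        rw [div_pow, Real.sq_sqrt]; norm_num
      have hlo2 : 2/((k:ℝ)+2)^2 ≤ a^2 := by
        have h0 : (Real.sqrt 2 / ((k:ℝ)+2))^2 = 2/((k:ℝ)+2)^2 := by
          rw [div_pow, Real.sq_sqrt]; norm_num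
        have h1' : (Real.sqrt 2 / ((k:ℝ)+2))^2 ≤ a^2 :=
          pow_le_pow_left₀ (by positivity) hlo 2
        linarith [h0 ▸ h1']
      have hkey : 2/((k:ℝ)+3)^2 ≤ a^2 * (1 - Real.sqrt 2/((k:ℝ)+3)) := by
        have h1' : 2/((k:ℝ)+3)^2 ≤ (2/((k:ℝ)+2)^2) * (1 - Real.sqrt 2/((k:ℝ)+3)) := by
          rw [div_mul_eq_mul_div, div_le_div_iff₀ (by positivity) (by positivity)]
          have h2' : Real.sqrt 2 * ((k:ℝ)+3) ≤ 2*(k:ℝ)+5 := by nlinarith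
          have h3' : (0:ℝ) < 1 - Real.sqrt 2/((k:ℝ)+3) := by linarith
          have h4' : 2 * (1 - Real.sqrt 2/((k:ℝ)+3)) * ((k:ℝ)+3) = 2*((k:ℝ)+3) - 2*Real.sqrt 2 := by
            field_simp
          nlinarith [sq_nonneg ((k:ℝ)+3)]
        have h2' : (2/((k:ℝ)+2)^2) * (1 - Real.sqrt 2/((k:ℝ)+3)) ≤ a^2 * (1 - Real.sqrt 2/((k:ℝ)+3)) := by
          apply mul_le_mul_of_nonneg_right hlo2
          linarith
        linarith
      -- apply mono_aux with x := c', c := x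
      show Real.sqrt 2 / ((k:ℝ)+1+2) ≤ x
      rw [show ((k:ℝ)+1+2) = (k:ℝ)+3 by ring]
      apply mono_aux hc' hc'1 hxpos
      rw [hcsq]
      nlinarith [mul_le_mul_of_nonneg_right hkey (by linarith : (0:ℝ) ≤ 1-x)]
    · -- upper bound: x ≤ 2/(k+2)
      have hc : (0:ℝ) < 2/((k:ℝ)+2) := by positivity
      have hhi2 : a^2 ≤ (2/((k:ℝ)+1))^2 := pow_le_pow_left₀ hapos.le hhi 2
      have hkey : a^2 * (1 - 2/((k:ℝ)+2)) ≤ (2/((k:ℝ)+2))^2 := by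
        have h1' : (2/((k:ℝ)+1))^2 * (1 - 2/((k:ℝ)+2)) ≤ (2/((k:ℝ)+2))^2 := by
          have hd : (2/((k:ℝ)+2))^2 - (2/((k:ℝ)+1))^2 * (1 - 2/((k:ℝ)+2))
              = 4/(((k:ℝ)+1)^2*((k:ℝ)+2)^2) := by
            field_simp
            ring
          have hd2 : (0:ℝ) < 4/(((k:ℝ)+1)^2*((k:ℝ)+2)^2) := by positivity
          linarith
        have h2' : a^2 * (1 - 2/((k:ℝ)+2)) ≤ (2/((k:ℝ)+1))^2 * (1 - 2/((k:ℝ)+2)) := by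
          apply mul_le_mul_of_nonneg_right hhi2
          rw [sub_nonneg, div_le_one (by linarith)]; linarith
        linarith
      show x ≤ 2/((k:ℝ)+1+1)
      rw [show ((k:ℝ)+1+1) = (k:ℝ)+2 by ring]
      apply mono_aux hxpos hx1 hc
      nlinarith [mul_le_mul_of_nonneg_right hkey (by linarith : (0:ℝ) ≤ 1-x)]
end

section
/- Let (e_k)_{k≥0} and (d_k)_{k≥0} be nonnegative sequences, (α_k) positive with α_1 = 1, 1/α_0² interpreted via 1−α_1 = 0, satisfying (1−α_k)/α_k² = 1/α_{k−1}² for k ≥ 2, and let A_k = 1 − 1/(k+1)². Suppose for all k ≥ 1: e_k/α_k² + (c·A_k/2) d_k ≤ (1−α_k)/α_k² · e_{k−1} + (c/2) d_{k−1}, where c > 0. Then for all N ≥ 1, e_N ≤ α_N² · c · d_0 · ∏_{k=2}^{N} (1/A_{k−1}). -/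
theorem stmt_7 (e d α : ℕ → ℝ) (c : ℝ) (hc : 0 < c)
    (he : ∀ k, 0 ≤ e k) (hd : ∀ k, 0 ≤ d k)
    (hαpos : ∀ k ≥ 1, 0 < α k) (hα1 : α 1 = 1)
    (hαrec : ∀ k ≥ 2, (1 - α k) / (α k) ^ 2 = 1 / (α (k - 1)) ^ 2)
    (hstep : ∀ k ≥ 1,
      e k / (α k) ^ 2 + c * (1 - 1 / ((k : ℝ) + 1) ^ 2) / 2 * d k ≤
        (1 - α k) / (α k) ^ 2 * e (k - 1) + c / 2 * d (k - 1)) :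
    ∀ N ≥ 1, e N ≤ (α N) ^ 2 * c * d 0 *
      ∏ k ∈ Finset.Icc 2 N, (1 / (1 - 1 / ((k : ℝ) - 1 + 1) ^ 2)) := by
  have hA : ∀ n : ℕ, 1 ≤ n → (0:ℝ) < 1 - 1 / ((n:ℝ) + 1) ^ 2 := by
    intro n hn
    have h1 : (1:ℝ) ≤ (n:ℝ) := by exact_mod_cast hn
    have hlt : (1:ℝ) / ((n:ℝ)+1)^2 < 1 := by
      rw [div_lt_one (by positivity)]
      nlinarith
    linarith
  have hprodpos : ∀ N : ℕ, (0:ℝ) <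
      ∏ k ∈ Finset.Icc 2 N, (1 / (1 - 1 / ((k : ℝ) - 1 + 1) ^ 2)) := by
    intro N
    apply Finset.prod_pos
    intro k hk
    have hk2 : 2 ≤ k := (Finset.mem_Icc.mp hk).1
    have h1 : ((k:ℝ)-1+1) = ((k-1 : ℕ) : ℝ) + 1 := by
      have h : 1 ≤ k := by omega
      push_cast [Nat.cast_sub h]
      ring
    have := hA (k-1) (by omega)
    rw [h1]
    positivity
  have key : ∀ N : ℕ, 1 ≤ N →
      e N / (α N)^2 + c * (1 - 1/((N:ℝ)+1)^2)/2 * d N ≤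
        c/2 * d 0 * ∏ k ∈ Finset.Icc 2 N, (1 / (1 - 1 / ((k : ℝ) - 1 + 1) ^ 2)) := by
    intro N hN
    induction N, hN using Nat.le_induction with
    | base =>
      have h := hstep 1 le_rfl
      rw [Finset.Icc_eq_empty (by norm_num)]
      simp only [Finset.prod_empty, mul_one]
      simp only [hα1, Nat.cast_one] at h ⊢
      norm_num at h ⊢
      linarith
    | succ n hn ih =>
      have h := hstep (n+1) (by omega)
      have hrec := hαrec (n+1) (by omega)
      simp only [Nat.add_sub_cancel] at h hrec
      rw [hrec] at h
      have hAn := hA n hn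
      have hαn := hαpos n hn
      have hen := he n
      have hdn := hd n
      set An : ℝ := 1 - 1/((n:ℝ)+1)^2 with hAn_def
      have hinv : 1 ≤ 1/An := by
        rw [le_div_iff₀ hAn]
        have : (0:ℝ) ≤ 1/((n:ℝ)+1)^2 := by positivity
        simp only [hAn_def]; linarith
    -- e n / α n ^2 + c/2 d n ≤ (1/An)*(e n /α n^2 + c*An/2 * d n)
      have hmid : 1 / (α n)^2 * e n + c/2 * d n ≤
          (1/An) * (e n / (α n)^2 + c * An/2 * d n) := by
        have h1 : 1/(α n)^2 * e n ≤ (1/An) * (e n / (α n)^2) := by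
          rw [mul_comm, mul_one_div]
          exact le_mul_of_one_le_left (by positivity) hinv
        have h2 : c/2 * d n = (1/An) * (c * An/2 * d n) := by
          field_simp
        linarith
      have hch : (1/An) * (e n / (α n)^2 + c * An/2 * d n) ≤
          (1/An) * (c/2 * d 0 * ∏ k ∈ Finset.Icc 2 n, (1 / (1 - 1 / ((k : ℝ) - 1 + 1) ^ 2))) :=
        mul_le_mul_of_nonneg_left ih (by positivity)
      have hprodsucc : (∏ k ∈ Finset.Icc 2 (n+1), (1 / (1 - 1 / ((k : ℝ) - 1 + 1) ^ 2)))
          = (∏ k ∈ Finset.Icc 2 n, (1 / (1 - 1 / ((k : ℝ) - 1 + 1) ^ 2))) * (1/An) := by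
        rw [Finset.prod_Icc_succ_top (by omega)]
        congr 2
        simp only [hAn_def]
        push_cast
        ring_nf
      rw [hprodsucc]
      push_cast at h ⊢
      simp only [hAn_def] at hmid hch
      linarith
  intro N hN
  have hk := key N hN
  have hαN := hαpos N hN
  have hAN := hA N hN
  have hdN := hd N
  have hd0 := hd 0
  have hprod := hprodpos N
  have h1 : e N ≤ (α N)^2 * (c/2 * d 0 * ∏ k ∈ Finset.Icc 2 N, (1 / (1 - 1 / ((k : ℝ) - 1 + 1) ^ 2))) := by
    have h2 : e N / (α N)^2 ≤ c/2 * d 0 * ∏ k ∈ Finset.Icc 2 N, (1 / (1 - 1 / ((k : ℝ) - 1 + 1) ^ 2)) := by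
      nlinarith [mul_nonneg (mul_nonneg (mul_nonneg hc.le hAN.le) (by norm_num : (0:ℝ) ≤ 1/2)) hdN]
    calc e N = (α N)^2 * (e N / (α N)^2) := by field_simp
      _ ≤ _ := by
          apply mul_le_mul_of_nonneg_left h2 (by positivity)
  calc e N ≤ _ := h1
    _ ≤ (α N) ^ 2 * c * d 0 * ∏ k ∈ Finset.Icc 2 N, (1 / (1 - 1 / ((k : ℝ) - 1 + 1) ^ 2)) := by
        nlinarith [sq_nonneg (α N), mul_nonneg hd0 hprod.le, mul_nonneg (mul_nonneg hc.le hd0) hprod.le]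
end

section
/- Let (e_k), (d_k), (α_k), (A_k), c be as in the accelerated recursion: e_k/α_k² + (cA_k/2)d_k ≤ e_{k−1}/α_{k−1}² + (c/2)d_{k−1} for k ≥ 2 with e_1/α_1² + (cA_1/2)d_1 ≤ (c/2)d_0, A_k = 1 − 1/(k+1)² ∈ (0,1], and √2/(N+2) ≤ α_N ≤ 2/(N+1). Then e_N ≤ 4c·d_0/(N+1)² for all N ≥ 1. -/
theorem stmt_8 (e d α : ℕ → ℝ) (c : ℝ) (hc : 0 < c)
    (he : ∀ k, 0 ≤ e k) (hd : ∀ k, 0 ≤ d k)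
    (hα1 : α 1 = 1)
    (hαbound : ∀ N ≥ 1, Real.sqrt 2 / (N + 2) ≤ α N ∧ α N ≤ 2 / (N + 1))
    (hstep1 : e 1 / (α 1) ^ 2 + c * (1 - 1 / ((1 : ℝ) + 1) ^ 2) / 2 * d 1 ≤ c / 2 * d 0)
    (hstep : ∀ k ≥ 2,
      e k / (α k) ^ 2 + c * (1 - 1 / ((k : ℝ) + 1) ^ 2) / 2 * d k ≤
        e (k - 1) / (α (k - 1)) ^ 2 + c / 2 * d (k - 1)) :
    ∀ N ≥ 1, e N ≤ 4 * c * d 0 / ((N : ℝ) + 1) ^ 2 := by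
  have hd0 : 0 ≤ d 0 := hd 0
  have key : ∀ N, 1 ≤ N →
      e N / (α N) ^ 2 + c * (1 - 1 / ((N : ℝ) + 1) ^ 2) / 2 * d N ≤
        c * d 0 * N / ((N : ℝ) + 1) := by
    intro N hN
    induction N with
    | zero => omega
    | succ n ih =>
      rcases Nat.lt_or_ge n 1 with h | h
      · interval_cases n
        push_cast
        norm_num at hstep1 ⊢
        linarith
      · have ih' := ih h
        have hstepn := hstep (n + 1) (by omega)
        simp only [Nat.add_sub_cancel] at hstepn
        have hs1 : (1 : ℝ) ≤ (n : ℝ) := by exact_mod_cast h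
        set s : ℝ := (n : ℝ) with hs
        have hαpos : 0 < α n := by
          have := (hαbound n h).1
          have h2 : (0:ℝ) < Real.sqrt 2 / (n + 2) := by
            apply div_pos (Real.sqrt_pos.mpr (by norm_num))
            linarith
          linarith
        have hx : 0 ≤ e n / (α n) ^ 2 := div_nonneg (he n) (sq_nonneg _)
        have hdn : 0 ≤ d n := hd n
        have hp1 : (0:ℝ) < s + 1 := by linarith
        have hp2 : (0:ℝ) < s + 2 := by linarith
        have hspos : (0:ℝ) < s := by linarith
        -- cleared-denominator form of ih'
        have h1 : e n / (α n) ^ 2 * (2 * (s + 1) ^ 2) + c * (s * (s + 2)) * d n ≤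
            2 * c * d 0 * s * (s + 1) := by
          have h2 := mul_le_mul_of_nonneg_right ih'
            (show (0:ℝ) ≤ 2 * (s + 1) ^ 2 by positivity)
          have h3 : (e n / (α n) ^ 2 + c * (1 - 1 / (s + 1) ^ 2) / 2 * d n) *
              (2 * (s + 1) ^ 2) =
              e n / (α n) ^ 2 * (2 * (s + 1) ^ 2) + c * (s * (s + 2)) * d n := by
            field_simp
            ring
          have h4 : c * d 0 * s / (s + 1) * (2 * (s + 1) ^ 2) =
              2 * c * d 0 * s * (s + 1) := by
            field_simp
          rw [h3, h4] at h2
          exact h2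
        have haux : e n / (α n) ^ 2 + c / 2 * d n ≤ c * d 0 * (s + 1) / (s + 2) := by
          rw [le_div_iff₀ hp2]
          nlinarith [mul_le_mul_of_nonneg_right h1 hp1.le,
            mul_nonneg (mul_nonneg hx hp1.le) hp1.le,
            mul_nonneg hx hp1.le, mul_nonneg hdn hc.le]
        push_cast at hstepn ⊢
        calc e (n+1) / (α (n+1)) ^ 2 + c * (1 - 1 / (s + 1 + 1) ^ 2) / 2 * d (n+1)
            ≤ e n / (α n) ^ 2 + c / 2 * d n := hstepn
          _ ≤ c * d 0 * (s + 1) / (s + 2) := haux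
          _ = c * d 0 * (s + 1) / (s + 1 + 1) := by ring_nf
  intro N hN
  have hk := key N hN
  have hs1 : (1:ℝ) ≤ (N : ℝ) := by exact_mod_cast hN
  have hαpos : 0 < α N := by
    have := (hαbound N hN).1
    have h2 : (0:ℝ) < Real.sqrt 2 / (N + 2) := by
      apply div_pos (Real.sqrt_pos.mpr (by norm_num)); linarith
    linarith
  have hαle : α N ≤ 2 / ((N : ℝ) + 1) := (hαbound N hN).2
  have hAn : (0:ℝ) ≤ 1 - 1 / ((N:ℝ) + 1) ^ 2 := by
    rw [sub_nonneg, div_le_one (by nlinarith)]; nlinarith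
  have hdN : 0 ≤ d N := hd N
  have hterm : 0 ≤ c * (1 - 1 / ((N:ℝ) + 1) ^ 2) / 2 * d N :=
    mul_nonneg (div_nonneg (mul_nonneg hc.le hAn) (by norm_num)) hdN
  have hx : e N / (α N) ^ 2 ≤ c * d 0 * N / ((N : ℝ) + 1) := by linarith
  have heq : e N = e N / (α N) ^ 2 * (α N) ^ 2 := by field_simp
  rw [heq]
  have hα2 : (α N) ^ 2 ≤ (2 / ((N : ℝ) + 1)) ^ 2 := by
    apply pow_le_pow_left₀ hαpos.le hαle
  have hxpos : 0 ≤ e N / (α N) ^ 2 := div_nonneg (he N) (sq_nonneg _)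
  have hM : c * d 0 * N / ((N : ℝ) + 1) ≤ c * d 0 := by
    rw [div_le_iff₀ (by linarith)]; nlinarith
  calc e N / (α N) ^ 2 * (α N) ^ 2 ≤ (c * d 0) * (2 / ((N : ℝ) + 1)) ^ 2 := by
        apply mul_le_mul (le_trans hx hM) hα2 (by positivity) (mul_nonneg hc.le hd0)
    _ = 4 * c * d 0 / ((N : ℝ) + 1) ^ 2 := by
        rw [div_pow]; ring
end

section
/- For all d₁, d₂ ∈ [0, π/4] and d₃ ∈ [|d₁−d₂|, d₁+d₂] with d₃ > 0, the inequality 2(1 − cos d₂) ≥ 2(1 − cos d₁) − 2 d₃ (cos d₂ − cos d₃ cos d₁)/(sin d₃) + (1/2) d₃² holds. -/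
open Real

lemma aux_tan_bound (t : ℝ) (ht : 0 < t) (ht2 : t < π / 2) : t * Real.cos t < Real.sin t := by
  have hc : 0 < Real.cos t := Real.cos_pos_of_mem_Ioo ⟨by linarith [Real.pi_pos], ht2⟩
  have htan := Real.lt_tan ht ht2
  rw [Real.tan_eq_sin_div_cos] at htan
  calc t * Real.cos t < (Real.sin t / Real.cos t) * Real.cos t := by
        exact mul_lt_mul_of_pos_right htan hc
    _ = Real.sin t := by field_simp

set_option maxHeartbeats 1000000 in
theorem stmt_12 (d₁ d₂ d₃ : ℝ)
    (h1 : d₁ ∈ Set.Icc 0 (π / 4)) (h2 : d₂ ∈ Set.Icc 0 (π / 4))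
    (h3 : d₃ ∈ Set.Icc |d₁ - d₂| (d₁ + d₂))
    (h3pos : 0 < d₃) :
    2 * (1 - cos d₂) ≥ 2 * (1 - cos d₁)
      - 2 * d₃ * (cos d₂ - cos d₃ * cos d₁) / sin d₃ + 1 / 2 * d₃ ^ 2 := by
  obtain ⟨ha0, ha1⟩ := h1
  obtain ⟨hb0, hb1⟩ := h2
  obtain ⟨_, hc1⟩ := h3
  have hpi := Real.pi_pos
  have hc2 : d₃ ≤ π / 2 := by linarith
  -- half angle t = d₃ / 2
  set t := d₃ / 2 with htdef
  have ht0 : 0 < t := by positivity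
  have ht2 : t < π / 2 := by
    have : t ≤ π / 4 := by simp only [htdef]; linarith
    linarith
  have hkey : t * Real.cos t < Real.sin t := aux_tan_bound t ht0 ht2
  have hst : 0 < Real.sin t := Real.sin_pos_of_pos_of_lt_pi ht0 (by linarith)
  have hct : 0 < Real.cos t := Real.cos_pos_of_mem_Ioo ⟨by linarith, ht2⟩
  have hd3 : d₃ = 2 * t := by rw [htdef]; ring
  have hsin : Real.sin d₃ = 2 * Real.sin t * Real.cos t := by
    rw [hd3, Real.sin_two_mul]
  have hcos : Real.cos d₃ = 1 - 2 * Real.sin t ^ 2 := by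
    rw [hd3, Real.cos_two_mul']
    nlinarith [Real.sin_sq_add_cos_sq t]
  have hs : 0 < Real.sin d₃ := by rw [hsin]; positivity
  -- sin d₃ ≤ d₃
  have hsc : Real.sin d₃ ≤ d₃ := Real.sin_le h3pos.le
  -- sin d₃ - d₃ * cos d₃ ≥ 0
  have hst2 : Real.sin t ^ 2 ≥ 0 := sq_nonneg _
  have hscc : d₃ * Real.cos d₃ ≤ Real.sin d₃ := by
    rw [hsin, hcos, hd3]
    have h1 : t * Real.cos t * Real.cos t ≤ Real.sin t * Real.cos t :=
      mul_le_mul_of_nonneg_right hkey.le hct.le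
    nlinarith [h1, Real.sin_sq_add_cos_sq t, mul_nonneg ht0.le hst2]
  -- cos bounds
  have hca : Real.cos d₁ ≥ Real.sqrt 2 / 2 := by
    have := Real.cos_pi_div_four
    have h := Real.cos_le_cos_of_nonneg_of_le_pi ha0 (by linarith) ha1
    linarith
  have hcb : Real.cos d₂ ≥ Real.sqrt 2 / 2 := by
    have := Real.cos_pi_div_four
    have h := Real.cos_le_cos_of_nonneg_of_le_pi hb0 (by linarith) hb1
    linarith
  have hs2 : Real.sqrt 2 ≥ 1 := by
    nlinarith [Real.sq_sqrt (by norm_num : (2:ℝ) ≥ 0), Real.sqrt_nonneg 2]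
  -- key inequality: 2√2 (1 - cos d₃) ≥ d₃ * sin d₃
  have hkey2 : 2 * Real.sqrt 2 * (1 - Real.cos d₃) ≥ d₃ * Real.sin d₃ := by
    rw [hsin, hcos, hd3]
    have e1 : t * Real.cos t * Real.sin t ≤ Real.sin t * Real.sin t :=
      mul_le_mul_of_nonneg_right hkey.le hst.le
    have e2 : 1 * (Real.sin t * Real.sin t) ≤ Real.sqrt 2 * (Real.sin t * Real.sin t) :=
      mul_le_mul_of_nonneg_right hs2 (by positivity)
    nlinarith [e1, e2]
  -- main: H ≥ 0
  have hH : 2 * Real.cos d₁ * (Real.sin d₃ - d₃ * Real.cos d₃)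
      + 2 * Real.cos d₂ * (d₃ - Real.sin d₃) - d₃ ^ 2 / 2 * Real.sin d₃ ≥ 0 := by
    have p1 : Real.cos d₁ * (Real.sin d₃ - d₃ * Real.cos d₃) ≥ Real.sqrt 2 / 2 * (Real.sin d₃ - d₃ * Real.cos d₃) :=
      mul_le_mul_of_nonneg_right hca (by linarith)
    have p2 : Real.cos d₂ * (d₃ - Real.sin d₃) ≥ Real.sqrt 2 / 2 * (d₃ - Real.sin d₃) :=
      mul_le_mul_of_nonneg_right hcb (by linarith)
    have p3 : d₃ * (2 * Real.sqrt 2 * (1 - Real.cos d₃) - d₃ * Real.sin d₃) ≥ 0 :=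
      mul_nonneg h3pos.le (by linarith)
    nlinarith [p1, p2, p3]
  rw [ge_iff_le, ← sub_nonneg]
  have heq : 2 * (1 - cos d₂) - (2 * (1 - cos d₁)
      - 2 * d₃ * (cos d₂ - cos d₃ * cos d₁) / sin d₃ + 1 / 2 * d₃ ^ 2)
      = (2 * Real.cos d₁ * (Real.sin d₃ - d₃ * Real.cos d₃)
      + 2 * Real.cos d₂ * (d₃ - Real.sin d₃) - d₃ ^ 2 / 2 * Real.sin d₃) / Real.sin d₃ := by
    field_simp
    ring
  rw [heq]
  exact div_nonneg hH hs.le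
end

section
/- Let f : E → ℝ be convex with minimizer θ*, κ > 0, α ∈ (0,1], and points θ_prev, ϑ̃_prev ∈ E. Set ϑ = θ_prev + α(ϑ̃_prev − θ_prev) and suppose θ̃ satisfies: f(y) + (κ/2)‖y − ϑ‖² ≥ f(θ̃) + (κ/2)‖θ̃ − ϑ‖² + (κ/2)‖θ̃ − y‖² + ⟨v, y − θ̃⟩ for all y, with ‖v‖ ≤ (κ/(k+1))‖θ̃ − ϑ‖. Setting ϑ̃ = θ_prev + (1/α)(θ̃ − θ_prev) and y = θ_prev + α(θ* − θ_prev), one has f(θ̃) ≤ α f(θ*) + (1−α) f(θ_prev) + (κα²/2)(‖θ* − ϑ̃_prev‖² − ‖θ* − ϑ̃‖²) − (κ/2)‖θ̃ − ϑ‖² + (κα/(k+1))‖θ̃ − ϑ‖·‖ϑ̃ − θ*‖. -/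
/-!
Put `ϑ = θp + a (ϑ̃p - θp)`, `ϑ̃ = θp + a⁻¹ (θ̃ - θp)` and test the inexact proximal inequality at
`y = θp + a (θ* - θp)`. Then `y - ϑ = a (θ* - ϑ̃p)` and `θ̃ - y = a (ϑ̃ - θ*)`, so the two quadratic
terms at `y` become `a²‖θ* - ϑ̃p‖²` and `a²‖ϑ̃ - θ*‖²`; convexity bounds `f y` by
`a f θ* + (1 - a) f θp`, and Cauchy–Schwarz with the bound on `‖v‖` controls `⟪v, y - θ̃⟫`.
-/

open Set
open scoped RealInnerProductSpace

lemma ConvexOn.apply_add_smul_sub_le {E : Type*} [AddCommGroup E] [Module ℝ E] {s : Set E}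
    {f : E → ℝ} (hf : ConvexOn ℝ s f) {x z : E} (hx : x ∈ s) (hz : z ∈ s) {a : ℝ}
    (ha0 : 0 ≤ a) (ha1 : a ≤ 1) :
    f (x + a • (z - x)) ≤ a * f z + (1 - a) * f x := by
  have hseg : x + a • (z - x) = a • z + (1 - a) • x := by module
  rw [hseg]
  exact hf.2 hz hx ha0 (sub_nonneg.mpr ha1) (by ring)

lemma sub_add_smul_sub_eq_smul {𝕜 V : Type*} [Field 𝕜] [AddCommGroup V] [Module 𝕜 V] {a : 𝕜}
    (ha : a ≠ 0) (p x z : V) :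
    x - (p + a • (z - p)) = a • (p + (1 / a) • (x - p) - z) := by
  rw [smul_sub a (p + _), smul_add, smul_smul, mul_one_div_cancel ha, one_smul]
  module

lemma le_of_inexact_prox {E : Type*} [NormedAddCommGroup E] [InnerProductSpace ℝ E]
    {f : E → ℝ} {κ : ℝ} {c x v y : E}
    (h : f y + κ / 2 * ‖y - c‖ ^ 2 ≥
      f x + κ / 2 * ‖x - c‖ ^ 2 + κ / 2 * ‖x - y‖ ^ 2 + ⟪v, y - x⟫) :
    f x ≤ f y + κ / 2 * ‖y - c‖ ^ 2 - κ / 2 * ‖x - c‖ ^ 2 - κ / 2 * ‖x - y‖ ^ 2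
      + ‖v‖ * ‖y - x‖ := by
  linarith [neg_le_of_abs_le (abs_real_inner_le_norm v (y - x))]

theorem stmt_16_general {E : Type*} [NormedAddCommGroup E] [InnerProductSpace ℝ E]
    (f : E → ℝ) (hconv : ConvexOn ℝ Set.univ f)
    (θstar : E)
    (κ a : ℝ) (ha : 0 < a) (ha1 : a ≤ 1) (k : ℕ)
    (θp ϑtp θt v : E)
    (hprox : ∀ y : E,
      f y + κ / 2 * ‖y - (θp + a • (ϑtp - θp))‖ ^ 2 ≥
        f θt + κ / 2 * ‖θt - (θp + a • (ϑtp - θp))‖ ^ 2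
          + κ / 2 * ‖θt - y‖ ^ 2 + ⟪v, y - θt⟫)
    (hv : ‖v‖ ≤ κ / (k + 1) * ‖θt - (θp + a • (ϑtp - θp))‖) :
    f θt ≤ a * f θstar + (1 - a) * f θp
      + κ * a ^ 2 / 2 * (‖θstar - ϑtp‖ ^ 2 - ‖θstar - (θp + (1 / a) • (θt - θp))‖ ^ 2)
      - κ / 2 * ‖θt - (θp + a • (ϑtp - θp))‖ ^ 2
      + κ * a / (k + 1) * ‖θt - (θp + a • (ϑtp - θp))‖
          * ‖(θp + (1 / a) • (θt - θp)) - θstar‖ := by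
  set ϑ := θp + a • (ϑtp - θp)
  set ϑt := θp + (1 / a) • (θt - θp)
  set y := θp + a • (θstar - θp)
  have hyϑ : ‖y - ϑ‖ = a * ‖θstar - ϑtp‖ := by
    rw [show y - ϑ = a • (θstar - ϑtp) by module, norm_smul_of_nonneg ha.le]
  have hθty : ‖θt - y‖ = a * ‖ϑt - θstar‖ := by
    rw [sub_add_smul_sub_eq_smul ha.ne', norm_smul_of_nonneg ha.le]
  have hstep := le_of_inexact_prox (hprox y)
  rw [hyϑ, hθty, norm_sub_rev y, hθty] at hstep
  have hfy : f y ≤ a * f θstar + (1 - a) * f θp :=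
    hconv.apply_add_smul_sub_le (mem_univ _) (mem_univ _) ha.le ha1
  have hvy : ‖v‖ * (a * ‖ϑt - θstar‖) ≤ κ / (k + 1) * ‖θt - ϑ‖ * (a * ‖ϑt - θstar‖) :=
    mul_le_mul_of_nonneg_right hv (by positivity)
  rw [norm_sub_rev θstar ϑt]
  linear_combination hstep + hfy + hvy

theorem stmt_16 {E : Type*} [NormedAddCommGroup E] [InnerProductSpace ℝ E]
    (f : E → ℝ) (hconv : ConvexOn ℝ Set.univ f)
    (θstar : E) (hmin : ∀ y, f θstar ≤ f y)
    (κ a : ℝ) (hκ : 0 < κ) (ha : 0 < a) (ha1 : a ≤ 1) (k : ℕ)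
    (θp ϑtp θt v : E)
    (hprox : ∀ y : E,
      f y + κ / 2 * ‖y - (θp + a • (ϑtp - θp))‖ ^ 2 ≥
        f θt + κ / 2 * ‖θt - (θp + a • (ϑtp - θp))‖ ^ 2
          + κ / 2 * ‖θt - y‖ ^ 2 + ⟪v, y - θt⟫)
    (hv : ‖v‖ ≤ κ / (k + 1) * ‖θt - (θp + a • (ϑtp - θp))‖) :
    f θt ≤ a * f θstar + (1 - a) * f θp
      + κ * a ^ 2 / 2 * (‖θstar - ϑtp‖ ^ 2 - ‖θstar - (θp + (1 / a) • (θt - θp))‖ ^ 2)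
      - κ / 2 * ‖θt - (θp + a • (ϑtp - θp))‖ ^ 2
      + κ * a / (k + 1) * ‖θt - (θp + a • (ϑtp - θp))‖
          * ‖(θp + (1 / a) • (θt - θp)) - θstar‖ :=
  stmt_16_general f hconv θstar κ a ha ha1 k θp ϑtp θt v hprox hv
end
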